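/- arXiv:1701.04348 — 3 statements merged into one kernel-verified Lean document; each statement's English description precedes it below -/
import Mathlib

section
/- Assume that φ : [0,∞) → [0,∞) is strictly increasing, continuous, concave, with φ(0) = 0, that ∫₀¹ dt/φ(t) < ∞, and that for some α ∈ (0,1) the function t ↦ t^{-α} φ(t) is strictly increasing on (0,1). Then there exists a function ψ : [0,∞) → [0,∞) which is strictly increasing, continuous, concave, with ψ(0) = 0, such that ∫₀¹ dt/ψ(t) < ∞ and lim_{t→0⁺} ψ(t)/φ(t) = 0. -/
open Set MeasureTheory Filter
open scoped Topology

/-!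
Let `F t = ∫₀ᵗ 1/φ`. The function `√F · φ` already has the right size: `(2√F)' = 1/(φ √F)`, so
`1/(√F · φ)` is integrable on `(0,1)`, and `√F → 0`. It need not be concave, so we take instead
the lower envelope, over `δ ∈ (0,1]`, of the concave functions
`t ↦ √(F δ) φ t + (√(F 1) φ(δ)/δ + 1) t`. This envelope is concave, strictly increasing and
continuous; it dominates `√F · φ` on `(0,1]` (for `t ≥ δ` because `φ t / t ≤ φ δ / δ`); and it is
at most `√(F δ) φ t + O_δ(t)`, where `t / φ t ≤ 2 F t → 0` because `1/φ` is decreasing.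
-/

section Primitive

variable {f : ℝ → ℝ} {a b : ℝ}

theorem tendsto_primitive_nhdsGT (hab : a < b) (hf : IntegrableOn f (Ioc a b)) :
    Tendsto (fun t => ∫ s in a..t, f s) (𝓝[>] a) (𝓝 0) := by
  have hcont : ContinuousWithinAt (fun t => ∫ s in a..t, f s) (Icc a b) a :=
    intervalIntegral.continuousWithinAt_primitive (measure_singleton a)
      (by simpa [hab.le, intervalIntegrable_iff_integrableOn_Ioc_of_le] using hf)
  have hlim := hcont.tendsto
  rw [intervalIntegral.integral_same] at hlim
  rw [← nhdsWithin_Ioc_eq_nhdsGT hab]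
  exact hlim.mono_left (nhdsWithin_mono _ Ioc_subset_Icc_self)

theorem integrableOn_div_sqrt_primitive (hab : a < b) (hf : IntegrableOn f (Ioc a b))
    (hfc : ContinuousOn f (Ioo a b)) (hpos : ∀ x ∈ Ioo a b, 0 < f x) :
    IntegrableOn (fun t => f t / √(∫ s in a..t, f s)) (Ioc a b) := by
  set F := fun t => ∫ s in a..t, f s
  have hFc : ContinuousOn F (Icc a b) := by
    simpa [uIcc_of_le hab.le] using intervalIntegral.continuousOn_primitive_interval
      (μ := volume) (a := a) (b := b) (f := f)
      (by rwa [uIcc_of_le hab.le, integrableOn_Icc_iff_integrableOn_Ioc])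
  have hderiv : ∀ x ∈ Ioo a b, HasDerivAt (fun t => 2 * √(F t)) (f x / √(F x)) x := by
    intro x hx
    have hint : IntervalIntegrable f volume a x :=
      (intervalIntegrable_iff_integrableOn_Ioc_of_le hx.1.le).2
        (hf.mono_set (Ioc_subset_Ioc_right hx.2.le))
    have hFx : 0 < F x := intervalIntegral.intervalIntegral_pos_of_pos_on hint
      (fun y hy => hpos y ⟨hy.1, hy.2.trans hx.2⟩) hx.1
    have hF : HasDerivAt F (f x) x := intervalIntegral.integral_hasDerivAt_right hint
      (hfc.stronglyMeasurableAtFilter isOpen_Ioo x hx)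
      (hfc.continuousAt (isOpen_Ioo.mem_nhds hx))
    exact ((hF.sqrt hFx.ne').const_mul 2).congr_deriv
      (by rw [← mul_div_assoc, mul_div_mul_left _ _ two_ne_zero])
  exact intervalIntegral.integrableOn_deriv_of_nonneg (continuousOn_const.mul hFc.sqrt) hderiv
    fun x hx => div_nonneg (hpos x hx).le (Real.sqrt_nonneg _)

theorem tendsto_mul_nhdsGT_zero_of_antitoneOn {g : ℝ → ℝ} (hb : 0 < b)
    (hg : IntegrableOn g (Ioc 0 b)) (hanti : AntitoneOn g (Ioc 0 b))
    (hnonneg : ∀ x ∈ Ioc 0 b, 0 ≤ g x) :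
    Tendsto (fun t => t * g t) (𝓝[>] 0) (𝓝 0) := by
  have hbound : ∀ t ∈ Ioo 0 b, t * g t ≤ 2 * ∫ s in 0..t, g s := by
    intro t ⟨ht0, htb⟩
    have hint : IntervalIntegrable g volume 0 t :=
      (intervalIntegrable_iff_integrableOn_Ioc_of_le ht0.le).2
        (hg.mono_set (Ioc_subset_Ioc_right htb.le))
    have hhalf : t / 2 * g t ≤ ∫ s in (t / 2)..t, g s := by
      calc t / 2 * g t = ∫ _ in (t / 2)..t, g t := by
            rw [intervalIntegral.integral_const, smul_eq_mul]; ring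
        _ ≤ ∫ s in (t / 2)..t, g s :=
          intervalIntegral.integral_mono_on (by linarith) intervalIntegrable_const
            ((intervalIntegrable_iff_integrableOn_Ioc_of_le (by linarith)).2
              (hg.mono_set (Ioc_subset_Ioc (by linarith) htb.le)))
            fun s hs => hanti ⟨by linarith [hs.1], hs.2.trans htb.le⟩ ⟨ht0, htb.le⟩ hs.2
    have hsub : ∫ s in (t / 2)..t, g s ≤ ∫ s in 0..t, g s :=
      intervalIntegral.integral_mono_interval (by linarith) (by linarith) le_rfl
        ((ae_restrict_iff' measurableSet_Ioc).2 (ae_of_all _ fun s hs =>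
          hnonneg s ⟨hs.1, hs.2.trans htb.le⟩)) hint
    linarith
  have hlim := (tendsto_primitive_nhdsGT hb hg).const_mul 2
  rw [mul_zero] at hlim
  refine squeeze_zero' ?_ ?_ hlim
  · filter_upwards [Ioo_mem_nhdsGT hb] with t ht using
      mul_nonneg ht.1.le (hnonneg t ⟨ht.1, ht.2.le⟩)
  · filter_upwards [Ioo_mem_nhdsGT hb] with t ht using hbound t ht

end Primitive

theorem antitoneOn_div_self_of_concaveOn {φ : ℝ → ℝ} (hconc : ConcaveOn ℝ (Ici 0) φ)
    (h0 : φ 0 = 0) : AntitoneOn (fun t => φ t / t) (Ioi 0) := by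
  intro x hx y hy hxy
  have := hconc.neg.secant_mono (a := 0) self_mem_Ici (mem_Ici.2 (le_of_lt hx))
    (mem_Ici.2 (le_of_lt hy)) (ne_of_gt hx) (ne_of_gt hy) hxy
  simp only [Pi.neg_apply, h0, neg_zero, sub_zero, neg_div] at this
  exact neg_le_neg_iff.1 this

section Envelope

variable {ι : Type*} {φ : ℝ → ℝ} {a b : ι → ℝ} {t : ℝ}

noncomputable def envelope (φ : ℝ → ℝ) (a b : ι → ℝ) (t : ℝ) : ℝ :=
  ⨅ i, (a i * φ t + b i * t)

theorem self_le_envelope_member (ha : ∀ i, 0 ≤ a i) (hb : ∀ i, 1 ≤ b i)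
    (hnonneg : ∀ t, 0 ≤ t → 0 ≤ φ t) (ht : 0 ≤ t) (i : ι) : t ≤ a i * φ t + b i * t := by
  nlinarith [mul_nonneg (ha i) (hnonneg t ht), hb i]

theorem envelope_le (ha : ∀ i, 0 ≤ a i) (hb : ∀ i, 1 ≤ b i) (hnonneg : ∀ t, 0 ≤ t → 0 ≤ φ t)
    (ht : 0 ≤ t) (i : ι) : envelope φ a b t ≤ a i * φ t + b i * t :=
  ciInf_le ⟨t, forall_mem_range.2 (self_le_envelope_member ha hb hnonneg ht)⟩ i

variable [Nonempty ι]

theorem self_le_envelope (ha : ∀ i, 0 ≤ a i) (hb : ∀ i, 1 ≤ b i)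
    (hnonneg : ∀ t, 0 ≤ t → 0 ≤ φ t) (ht : 0 ≤ t) : t ≤ envelope φ a b t :=
  le_ciInf (self_le_envelope_member ha hb hnonneg ht)

theorem envelope_zero (h0 : φ 0 = 0) : envelope φ a b 0 = 0 := by
  simp [envelope, h0]

theorem envelope_add_sub_le (ha : ∀ i, 0 ≤ a i) (hb : ∀ i, 1 ≤ b i)
    (hnonneg : ∀ t, 0 ≤ t → 0 ≤ φ t) (hmono : MonotoneOn φ (Ici 0)) {s t : ℝ} (hs : 0 ≤ s)
    (hst : s ≤ t) : envelope φ a b s + (t - s) ≤ envelope φ a b t := by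
  refine le_ciInf fun i => ?_
  have hφst := mul_le_mul_of_nonneg_left (hmono hs (hs.trans hst) hst) (ha i)
  nlinarith [envelope_le ha hb hnonneg hs i, hb i]

theorem strictMonoOn_envelope (ha : ∀ i, 0 ≤ a i) (hb : ∀ i, 1 ≤ b i)
    (hnonneg : ∀ t, 0 ≤ t → 0 ≤ φ t) (hmono : MonotoneOn φ (Ici 0)) :
    StrictMonoOn (envelope φ a b) (Ici 0) := fun s hs t _ hst => by
  linarith [envelope_add_sub_le ha hb hnonneg hmono hs hst.le]

theorem concaveOn_envelope (ha : ∀ i, 0 ≤ a i) (hb : ∀ i, 1 ≤ b i)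
    (hnonneg : ∀ t, 0 ≤ t → 0 ≤ φ t) (hconc : ConcaveOn ℝ (Ici 0) φ) :
    ConcaveOn ℝ (Ici 0) (envelope φ a b) := by
  refine ⟨convex_Ici 0, fun x hx y hy μ ν hμ hν hμν => le_ciInf fun i => ?_⟩
  have hφxy := mul_le_mul_of_nonneg_left (hconc.2 hx hy hμ hν hμν) (ha i)
  have hx' := mul_le_mul_of_nonneg_left (envelope_le ha hb hnonneg hx i) hμ
  have hy' := mul_le_mul_of_nonneg_left (envelope_le ha hb hnonneg hy i) hν
  simp only [smul_eq_mul] at *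
  calc μ * envelope φ a b x + ν * envelope φ a b y
      ≤ μ * (a i * φ x + b i * x) + ν * (a i * φ y + b i * y) := add_le_add hx' hy'
    _ = a i * (μ * φ x + ν * φ y) + b i * (μ * x + ν * y) := by ring
    _ ≤ a i * φ (μ * x + ν * y) + b i * (μ * x + ν * y) := by linarith

theorem continuousOn_envelope (ha : ∀ i, 0 ≤ a i) (hb : ∀ i, 1 ≤ b i)
    (hnonneg : ∀ t, 0 ≤ t → 0 ≤ φ t) (hconc : ConcaveOn ℝ (Ici 0) φ)
    (hcont : ContinuousWithinAt φ (Ici 0) 0) (h0 : φ 0 = 0) :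
    ContinuousOn (envelope φ a b) (Ici 0) := by
  refine (concaveOn_envelope ha hb hnonneg hconc).continuousOn_Ici ?_
  let i : ι := Classical.arbitrary ι
  have hmember : Tendsto (fun t => a i * φ t + b i * t) (𝓝[Ici 0] 0) (𝓝 0) := by
    have hφ0 : Tendsto φ (𝓝[Ici 0] 0) (𝓝 0) := by simpa [h0] using hcont.tendsto
    simpa using (hφ0.const_mul (a i)).add
      ((tendsto_id.mono_left nhdsWithin_le_nhds).const_mul (b i))
  rw [ContinuousWithinAt, envelope_zero h0]
  refine squeeze_zero' ?_ ?_ hmember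
  · filter_upwards [self_mem_nhdsWithin] with t ht using
      ht.out.trans (self_le_envelope ha hb hnonneg ht)
  · filter_upwards [self_mem_nhdsWithin] with t ht using envelope_le ha hb hnonneg ht i

end Envelope

section SmallerModulus

variable {φ : ℝ → ℝ}

noncomputable def smallerModulus (φ : ℝ → ℝ) : ℝ → ℝ :=
  envelope φ (fun δ : Ioc (0 : ℝ) 1 => √(∫ s in 0..δ, 1 / φ s))
    (fun δ => √(∫ s in 0..1, 1 / φ s) * (φ δ / δ) + 1)

instance : Nonempty (Ioc (0 : ℝ) 1) := nonempty_Ioc_subtype zero_lt_one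

theorem one_le_smallerModulus_slope (hnonneg : ∀ t, 0 ≤ t → 0 ≤ φ t) (δ : Ioc (0 : ℝ) 1) :
    1 ≤ √(∫ s in 0..1, 1 / φ s) * (φ δ / δ) + 1 := by
  have := div_nonneg (hnonneg δ δ.2.1.le) δ.2.1.le
  nlinarith [Real.sqrt_nonneg (∫ s in 0..1, 1 / φ s)]

theorem sqrt_primitive_mul_le_smallerModulus (hnonneg : ∀ t, 0 ≤ t → 0 ≤ φ t)
    (hconc : ConcaveOn ℝ (Ici 0) φ) (h0 : φ 0 = 0)
    (hint : IntegrableOn (fun t => 1 / φ t) (Ioc 0 1)) {t : ℝ} (ht : t ∈ Ioc (0 : ℝ) 1) :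
    √(∫ s in 0..t, 1 / φ s) * φ t ≤ smallerModulus φ t := by
  have hsqrt_mono : ∀ r u, 0 ≤ r → r ≤ u → u ≤ 1 →
      √(∫ s in 0..r, 1 / φ s) ≤ √(∫ s in 0..u, 1 / φ s) := fun r u hr hru hu =>
    Real.sqrt_le_sqrt <| intervalIntegral.integral_mono_interval le_rfl hr hru
      ((ae_restrict_iff' measurableSet_Ioc).2 (ae_of_all _ fun s hs =>
        one_div_nonneg.2 (hnonneg s hs.1.le)))
      ((intervalIntegrable_iff_integrableOn_Ioc_of_le (hr.trans hru)).2
        (hint.mono_set (Ioc_subset_Ioc_right hu)))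
  refine le_ciInf fun ⟨δ, hδ⟩ => ?_
  have hb := one_le_smallerModulus_slope hnonneg ⟨δ, hδ⟩
  have hφt := hnonneg t ht.1.le
  rcases le_total t δ with htδ | hδt
  · have := mul_le_mul_of_nonneg_right (hsqrt_mono t δ ht.1.le htδ hδ.2) hφt
    dsimp only
    nlinarith [ht.1]
  · have hslope : φ t ≤ φ δ / δ * t := by
      have := antitoneOn_div_self_of_concaveOn hconc h0 hδ.1 (mem_Ioi.2 ht.1) hδt
      rwa [div_le_iff₀ ht.1] at this
    have h1 := mul_le_mul_of_nonneg_right (hsqrt_mono t 1 ht.1.le ht.2 le_rfl) hφt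
    have h2 := mul_le_mul_of_nonneg_left hslope (Real.sqrt_nonneg (∫ s in 0..1, 1 / φ s))
    have h3 := mul_nonneg (Real.sqrt_nonneg (∫ s in 0..δ, 1 / φ s)) hφt
    dsimp only
    nlinarith [ht.1]

theorem tendsto_smallerModulus_div (hmono : StrictMonoOn φ (Ici 0)) (h0 : φ 0 = 0)
    (hnonneg : ∀ t, 0 ≤ t → 0 ≤ φ t) (hint : IntegrableOn (fun t => 1 / φ t) (Ioc 0 1)) :
    Tendsto (fun t => smallerModulus φ t / φ t) (𝓝[>] 0) (𝓝 0) := by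
  have hpos : ∀ t, 0 < t → 0 < φ t := fun t ht => h0 ▸ hmono self_mem_Ici ht.le ht
  have hsqrt : Tendsto (fun t => √(∫ s in 0..t, 1 / φ s)) (𝓝[>] 0) (𝓝 0) := by
    simpa using (tendsto_primitive_nhdsGT zero_lt_one hint).sqrt
  have hratio : Tendsto (fun t => t * (1 / φ t)) (𝓝[>] 0) (𝓝 0) :=
    tendsto_mul_nhdsGT_zero_of_antitoneOn zero_lt_one hint
      (fun x hx y _ hxy => one_div_le_one_div_of_le (hpos x hx.1)
        (hmono.monotoneOn (mem_Ici.2 hx.1.le) (mem_Ici.2 (hx.1.trans_le hxy).le) hxy))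
      fun x hx => one_div_nonneg.2 (hnonneg x hx.1.le)
  refine tendsto_order.2 ⟨fun c hc => ?_, fun ε hε => ?_⟩
  · filter_upwards [self_mem_nhdsWithin] with t (ht : 0 < t)
    exact hc.trans_le (div_nonneg
      (ht.le.trans (self_le_envelope (fun _ => Real.sqrt_nonneg _)
        (one_le_smallerModulus_slope hnonneg) hnonneg ht.le)) (hnonneg t ht.le))
  obtain ⟨δ, hδε, hδ⟩ := ((hsqrt.eventually (gt_mem_nhds hε)).and
    (Ioo_mem_nhdsGT zero_lt_one)).exists
  set B := √(∫ s in 0..1, 1 / φ s) * (φ δ / δ) + 1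
  have hlim : Tendsto (fun t => √(∫ s in 0..δ, 1 / φ s) + B * (t * (1 / φ t))) (𝓝[>] 0)
      (𝓝 (√(∫ s in 0..δ, 1 / φ s))) := by
    simpa using tendsto_const_nhds.add (hratio.const_mul B)
  filter_upwards [hlim.eventually (gt_mem_nhds hδε), self_mem_nhdsWithin]
    with t hlt (ht : 0 < t)
  refine lt_of_le_of_lt ?_ hlt
  rw [div_le_iff₀ (hpos t ht)]
  calc smallerModulus φ t ≤ √(∫ s in 0..δ, 1 / φ s) * φ t + B * t :=
        envelope_le (fun _ => Real.sqrt_nonneg _) (one_le_smallerModulus_slope hnonneg) hnonneg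
          ht.le ⟨δ, hδ.1, hδ.2.le⟩
    _ = (√(∫ s in 0..δ, 1 / φ s) + B * (t * (1 / φ t))) * φ t := by
      field_simp [(hpos t ht).ne']

theorem integrableOn_inv_smallerModulus (hmono : StrictMonoOn φ (Ici 0))
    (hcont : ContinuousOn φ (Ici 0)) (hconc : ConcaveOn ℝ (Ici 0) φ) (h0 : φ 0 = 0)
    (hnonneg : ∀ t, 0 ≤ t → 0 ≤ φ t) (hint : IntegrableOn (fun t => 1 / φ t) (Ioc 0 1)) :
    IntegrableOn (fun t => 1 / smallerModulus φ t) (Ioc 0 1) := by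
  have hpos : ∀ t, 0 < t → 0 < φ t := fun t ht => h0 ▸ hmono self_mem_Ici ht.le ht
  have ha : ∀ δ : Ioc (0 : ℝ) 1, 0 ≤ √(∫ s in 0..δ, 1 / φ s) := fun _ => Real.sqrt_nonneg _
  have hb := one_le_smallerModulus_slope hnonneg
  have hψpos : ∀ t, 0 < t → 0 < smallerModulus φ t := fun t ht =>
    ht.trans_le (self_le_envelope ha hb hnonneg ht.le)
  have hψc : ContinuousOn (smallerModulus φ) (Ici 0) :=
    continuousOn_envelope ha hb hnonneg hconc (hcont 0 self_mem_Ici) h0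
  have hdom := integrableOn_div_sqrt_primitive zero_lt_one hint
    ((continuousOn_const.div (hcont.mono Ioi_subset_Ici_self)
      fun x hx => (hpos x hx).ne').mono Ioo_subset_Ioi_self)
    fun x hx => one_div_pos.2 (hpos x hx.1)
  refine hdom.mono' ((continuousOn_const.div (hψc.mono (Ioc_subset_Ioi_self.trans
    Ioi_subset_Ici_self)) fun t ht => (hψpos t ht.1).ne').aestronglyMeasurable measurableSet_Ioc)
    ((ae_restrict_iff' measurableSet_Ioc).2 (ae_of_all _ fun t ht => ?_))
  have hF : 0 < √(∫ s in 0..t, 1 / φ s) := Real.sqrt_pos.2 <|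
    intervalIntegral.intervalIntegral_pos_of_pos_on
      ((intervalIntegrable_iff_integrableOn_Ioc_of_le ht.1.le).2
        (hint.mono_set (Ioc_subset_Ioc_right ht.2)))
      (fun s hs => one_div_pos.2 (hpos s hs.1)) ht.1
  rw [Real.norm_of_nonneg (one_div_nonneg.2 (hψpos t ht.1).le), div_div, mul_comm]
  exact one_div_le_one_div_of_le (mul_pos hF (hpos t ht.1))
    (sqrt_primitive_mul_le_smallerModulus hnonneg hconc h0 hint ht)

end SmallerModulus

theorem exists_smaller_modulus_general (φ : ℝ → ℝ)
    (hmono : StrictMonoOn φ (Ici 0))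
    (hcont : ContinuousOn φ (Ici 0))
    (hconc : ConcaveOn ℝ (Ici 0) φ)
    (h0 : φ 0 = 0)
    (hnonneg : ∀ t, 0 ≤ t → 0 ≤ φ t)
    (hint : IntegrableOn (fun t => 1 / φ t) (Ioo (0:ℝ) 1)) :
    ∃ ψ : ℝ → ℝ,
      StrictMonoOn ψ (Ici 0) ∧
      ContinuousOn ψ (Ici 0) ∧
      ConcaveOn ℝ (Ici 0) ψ ∧
      ψ 0 = 0 ∧
      (∀ t, 0 ≤ t → 0 ≤ ψ t) ∧
      IntegrableOn (fun t => 1 / ψ t) (Ioo (0:ℝ) 1) ∧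
      Tendsto (fun t => ψ t / φ t) (𝓝[>] (0:ℝ)) (𝓝 0) := by
  have hint' : IntegrableOn (fun t => 1 / φ t) (Ioc 0 1) := by
    rwa [integrableOn_Ioc_iff_integrableOn_Ioo]
  have ha : ∀ δ : Ioc (0 : ℝ) 1, 0 ≤ √(∫ s in 0..δ, 1 / φ s) := fun _ => Real.sqrt_nonneg _
  have hb := one_le_smallerModulus_slope hnonneg
  refine ⟨smallerModulus φ, strictMonoOn_envelope ha hb hnonneg hmono.monotoneOn,
    continuousOn_envelope ha hb hnonneg hconc (hcont 0 self_mem_Ici) h0,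
    concaveOn_envelope ha hb hnonneg hconc, envelope_zero h0,
    fun t ht => ht.trans (self_le_envelope ha hb hnonneg ht),
    (integrableOn_inv_smallerModulus hmono hcont hconc h0 hnonneg hint').mono_set
      Ioo_subset_Ioc_self,
    tendsto_smallerModulus_div hmono h0 hnonneg hint'⟩

/-- If `φ : [0,∞) → [0,∞)` is strictly increasing, continuous, concave with
`φ(0)=0`, `∫₀¹ dt/φ(t) < ∞`, and `t ↦ t^(-α) φ(t)` is strictly increasing on `(0,1)` for some
`α ∈ (0,1)`, then there is `ψ : [0,∞) → [0,∞)` strictly increasing, continuous, concave with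
`ψ(0)=0`, `∫₀¹ dt/ψ(t) < ∞` and `ψ(t)/φ(t) → 0` as `t → 0⁺`. -/
theorem exists_smaller_modulus (φ : ℝ → ℝ)
    (hmono : StrictMonoOn φ (Ici 0))
    (hcont : ContinuousOn φ (Ici 0))
    (hconc : ConcaveOn ℝ (Ici 0) φ)
    (h0 : φ 0 = 0)
    (hnonneg : ∀ t, 0 ≤ t → 0 ≤ φ t)
    (hint : IntegrableOn (fun t => 1 / φ t) (Ioo (0:ℝ) 1))
    (hpow : ∃ α ∈ Ioo (0:ℝ) 1, StrictMonoOn (fun t => t ^ (-α) * φ t) (Ioo (0:ℝ) 1)) :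
    ∃ ψ : ℝ → ℝ,
      StrictMonoOn ψ (Ici 0) ∧
      ContinuousOn ψ (Ici 0) ∧
      ConcaveOn ℝ (Ici 0) ψ ∧
      ψ 0 = 0 ∧
      (∀ t, 0 ≤ t → 0 ≤ ψ t) ∧
      IntegrableOn (fun t => 1 / ψ t) (Ioo (0:ℝ) 1) ∧
      Tendsto (fun t => ψ t / φ t) (𝓝[>] (0:ℝ)) (𝓝 0) :=
  exists_smaller_modulus_general φ hmono hcont hconc h0 hnonneg hint
end

section
/- Let φ : [0,∞) → [0,∞) be strictly increasing, continuous, concave, with φ(0) = 0 and lim_{t→∞} φ(t) = ∞, assume ∫₀¹ ds/φ(s) < ∞, and let N > 0 satisfy 2^{−N}(1 + ∫₀^{φ⁻¹(2^{−N})} ds/φ(s)) = 1. For k = 0, 1, 2, … set α_k = 2^{−(N+k)}(1 + ∫₀^{φ⁻¹(2^{−(N+k)})} ds/φ(s)). Then: (a) α₀ = 1; (b) 2α_{k+1} < α_k for all k; (c) lim_{k→∞} 2^k α_k = 2^{−N} > 0; (d) α_k ≤ 2^{−k} for all k, and there exists K₀ such that 2^{−(N+k)} < α_k < 2^{−(N+k−1)}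 for all k ≥ K₀. -/
open Set MeasureTheory Filter
open scoped Topology

/-!
Write `β_k = 2^{-(N+k)}` and `g t = ∫₀^{φ⁻¹ t} ds/φ(s)`, so that `α_k = β_k (1 + g β_k)`.
The integrand is positive and `φ⁻¹` is strictly increasing, so `g` is strictly increasing on
`[0, ∞)`; together with `β_k = 2 β_{k+1}` this gives `2 α_{k+1} < α_k`, and halving from `α₀ = 1`
gives `α_k ≤ 2^{-k}`. Integrability of `1/φ` at `0` makes `g` continuous at `0` with `g 0 = 0`, so
`2^k α_k = 2^{-N} (1 + g β_k) → 2^{-N}`, and eventually `0 < g β_k < 1`, which is the two-sided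
bound `β_k < α_k < 2 β_k`.
-/

theorem ContinuousOn.surjOn_Ici_of_tendsto_atTop {f : ℝ → ℝ} {a : ℝ}
    (hf : ContinuousOn f (Ici a)) (htop : Tendsto f atTop atTop) :
    SurjOn f (Ici a) (Ici (f a)) := by
  intro y hy
  obtain ⟨b, hyb, hab⟩ := ((htop.eventually_ge_atTop y).and (eventually_ge_atTop a)).exists
  exact hf.surjOn_Icc self_mem_Ici hab ⟨hy, hyb⟩

theorem StrictMonoOn.strictMonoOn_of_rightInvOn {α β : Type*} [LinearOrder α] [Preorder β]
    {f : α → β} {g : β → α} {s : Set α} {t : Set β}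
    (hf : StrictMonoOn f s) (hg : MapsTo g t s) (hfg : RightInvOn g f t) :
    StrictMonoOn g t := by
  intro a ha b hb hab
  by_contra! hba
  have := hf.monotoneOn (hg hb) (hg ha) hba
  rw [hfg ha, hfg hb] at this
  exact hab.not_ge this

theorem MeasureTheory.IntegrableOn.Ioo_of_continuousOn_Icc {E : Type*} [NormedAddCommGroup E]
    {f : ℝ → E} {a b c : ℝ} (h : IntegrableOn f (Ioo a b)) (hc : ContinuousOn f (Icc b c)) :
    IntegrableOn f (Ioo a c) :=
  (h.union hc.integrableOn_Icc).mono_set fun x hx =>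
    (lt_or_ge x b).imp (fun hxb => ⟨hx.1, hxb⟩) fun hbx => ⟨hbx, hx.2.le⟩

theorem setIntegral_Ioo_zero_eq_intervalIntegral {E : Type*} [NormedAddCommGroup E]
    [NormedSpace ℝ E] (f : ℝ → E) {y : ℝ} (hy : 0 ≤ y) :
    ∫ s in Ioo 0 y, f s = ∫ s in 0..y, f s := by
  rw [intervalIntegral.integral_of_le hy, integral_Ioc_eq_integral_Ioo]

theorem strictMonoOn_setIntegral_Ioo_zero {f : ℝ → ℝ} (hpos : ∀ s, 0 < s → 0 < f s)
    (hint : ∀ c, IntegrableOn f (Ioo 0 c)) :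
    StrictMonoOn (fun y => ∫ s in Ioo 0 y, f s) (Ici 0) := by
  intro a ha b hb hab
  have hI : ∀ c, 0 ≤ c → IntervalIntegrable f volume 0 c := fun c hc =>
    (intervalIntegrable_iff_integrableOn_Ioo_of_le hc).mpr (hint c)
  simp only [setIntegral_Ioo_zero_eq_intervalIntegral f ha,
    setIntegral_Ioo_zero_eq_intervalIntegral f hb]
  rw [← sub_pos, intervalIntegral.integral_interval_sub_left (hI b hb) (hI a ha)]
  exact intervalIntegral.intervalIntegral_pos_of_pos_on ((hI a ha).symm.trans (hI b hb))
    (fun x hx => hpos x (lt_of_le_of_lt ha hx.1)) hab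

theorem continuousWithinAt_setIntegral_Ioo_zero {E : Type*} [NormedAddCommGroup E]
    [NormedSpace ℝ E] {f : ℝ → E} {c : ℝ} (hc : 0 < c) (hint : IntegrableOn f (Ioo 0 c)) :
    ContinuousWithinAt (fun y => ∫ s in Ioo 0 y, f s) (Ici 0) 0 := by
  have hIcc : IntegrableOn f (uIcc 0 c) := by
    rwa [uIcc_of_le hc.le, integrableOn_Icc_iff_integrableOn_Ioo]
  have := intervalIntegral.continuousOn_primitive_interval hIcc 0 left_mem_uIcc
  rw [uIcc_of_le hc.le] at this
  refine (this.mono_of_mem_nhdsWithin (Icc_mem_nhdsGE hc)).congr (fun y hy => ?_) ?_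
  · exact setIntegral_Ioo_zero_eq_intervalIntegral f hy
  · exact setIntegral_Ioo_zero_eq_intervalIntegral f le_rfl

theorem two_mul_two_rpow_neg_add_succ (N : ℝ) (k : ℕ) :
    2 * (2:ℝ) ^ (-(N + ↑(k + 1))) = 2 ^ (-(N + k)) := by
  rw [show -(N + ↑(k + 1)) = -(N + k) - 1 by push_cast; ring,
    Real.rpow_sub_one two_ne_zero]
  ring

theorem two_pow_mul_two_rpow_neg_add (N : ℝ) (k : ℕ) :
    (2:ℝ) ^ k * 2 ^ (-(N + k)) = 2 ^ (-N) := by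
  rw [← Real.rpow_natCast, ← Real.rpow_add two_pos]
  ring_nf

theorem tendsto_two_rpow_neg_add (N : ℝ) :
    Tendsto (fun k : ℕ => (2:ℝ) ^ (-(N + k))) atTop (𝓝[>] 0) := by
  refine tendsto_nhdsWithin_iff.mpr ⟨?_, .of_forall fun k => mem_Ioi.mpr (by positivity)⟩
  exact (tendsto_rpow_atBot_of_base_gt_one 2 one_lt_two).comp <| tendsto_neg_atTop_atBot.comp <|
    tendsto_atTop_add_const_left _ N tendsto_natCast_atTop_atTop

theorem le_two_rpow_neg_of_two_mul_succ_le {u : ℕ → ℝ} (h0 : u 0 ≤ 1)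
    (h : ∀ k, 2 * u (k + 1) ≤ u k) (k : ℕ) : u k ≤ (2:ℝ) ^ (-(k:ℝ)) := by
  induction k with
  | zero => simpa using h0
  | succ k ih =>
    have h2 : 2 * (2:ℝ) ^ (-((k + 1 : ℕ) : ℝ)) = 2 ^ (-(k:ℝ)) := by
      simpa using two_mul_two_rpow_neg_add_succ 0 k
    linarith [h k]

noncomputable def alphaSeq (g : ℝ → ℝ) (N : ℝ) (k : ℕ) : ℝ :=
  (2:ℝ) ^ (-(N + k)) * (1 + g ((2:ℝ) ^ (-(N + k))))

section alphaSeq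

variable {g : ℝ → ℝ}

theorem two_mul_alphaSeq_succ_lt (hg : StrictMonoOn g (Ici 0)) (N : ℝ) (k : ℕ) :
    2 * alphaSeq g N (k + 1) < alphaSeq g N k := by
  have hβ : (0:ℝ) < 2 ^ (-(N + k)) := by positivity
  have hlt : g (2 ^ (-(N + ↑(k + 1)))) < g (2 ^ (-(N + k))) := by
    refine hg (mem_Ici.mpr (by positivity)) hβ.le ?_
    linarith [two_mul_two_rpow_neg_add_succ N k]
  rw [alphaSeq, alphaSeq, ← mul_assoc, two_mul_two_rpow_neg_add_succ]
  gcongr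

theorem tendsto_comp_two_rpow_neg_add (hg : ContinuousWithinAt g (Ici 0) 0) (N : ℝ) :
    Tendsto (fun k : ℕ => g ((2:ℝ) ^ (-(N + k)))) atTop (𝓝 (g 0)) :=
  hg.tendsto.comp (tendsto_nhdsWithin_mono_right Ioi_subset_Ici_self (tendsto_two_rpow_neg_add N))

theorem tendsto_two_pow_mul_alphaSeq (hg : ContinuousWithinAt g (Ici 0) 0) (hg0 : g 0 = 0)
    (N : ℝ) : Tendsto (fun k : ℕ => 2 ^ k * alphaSeq g N k) atTop (𝓝 ((2:ℝ) ^ (-N))) := by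
  simp_rw [alphaSeq, ← mul_assoc, two_pow_mul_two_rpow_neg_add]
  simpa [hg0] using ((tendsto_comp_two_rpow_neg_add hg N).const_add 1).const_mul ((2:ℝ) ^ (-N))

theorem eventually_two_rpow_neg_add_lt_alphaSeq_lt (hg : StrictMonoOn g (Ici 0))
    (hgc : ContinuousWithinAt g (Ici 0) 0) (hg0 : g 0 = 0) (N : ℝ) :
    ∀ᶠ k : ℕ in atTop, (2:ℝ) ^ (-(N + k)) < alphaSeq g N k ∧
      alphaSeq g N k < (2:ℝ) ^ (-(N + k - 1)) := by
  have hlim := tendsto_comp_two_rpow_neg_add hgc N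
  rw [hg0] at hlim
  filter_upwards [hlim.eventually (gt_mem_nhds one_pos)] with k hk
  have hβ : (0:ℝ) < 2 ^ (-(N + k)) := by positivity
  have hpos : 0 < g (2 ^ (-(N + k))) := hg0 ▸ hg self_mem_Ici hβ.le hβ
  rw [alphaSeq, show -(N + k - 1) = -(N + k) + 1 by ring, Real.rpow_add_one two_ne_zero]
  constructor <;> nlinarith

end alphaSeq

theorem alpha_seq_properties_general (φ φinv : ℝ → ℝ)
    (hmono : StrictMonoOn φ (Ici 0))
    (hcont : ContinuousOn φ (Ici 0))
    (h0 : φ 0 = 0)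
    (htop : Tendsto φ atTop atTop)
    (hlinv : ∀ t, 0 ≤ t → φinv (φ t) = t)
    (hrinv : ∀ s, 0 ≤ s → φ (φinv s) = s)
    (hint : IntegrableOn (fun s => 1 / φ s) (Ioo (0:ℝ) 1))
    (N : ℝ)
    (hNeq : (2:ℝ) ^ (-N) * (1 + ∫ s in Ioo (0:ℝ) (φinv ((2:ℝ) ^ (-N))), 1 / φ s) = 1)
    (α : ℕ → ℝ)
    (hα : ∀ k : ℕ, α k = (2:ℝ) ^ (-(N + (k:ℝ))) *
      (1 + ∫ s in Ioo (0:ℝ) (φinv ((2:ℝ) ^ (-(N + (k:ℝ))))), 1 / φ s)) :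
    α 0 = 1 ∧
    (∀ k : ℕ, 2 * α (k + 1) < α k) ∧
    Tendsto (fun k : ℕ => 2 ^ k * α k) atTop (𝓝 ((2:ℝ) ^ (-N))) ∧
    (0:ℝ) < (2:ℝ) ^ (-N) ∧
    (∀ k : ℕ, α k ≤ (2:ℝ) ^ (-(k:ℝ))) ∧
    ∃ K₀ : ℕ, ∀ k : ℕ, K₀ ≤ k →
      (2:ℝ) ^ (-(N + (k:ℝ))) < α k ∧ α k < (2:ℝ) ^ (-(N + (k:ℝ) - 1)) := by
  have hφpos : ∀ s, 0 < s → 0 < φ s := fun s hs => h0 ▸ hmono self_mem_Ici hs.le hs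
  have hinv0 : φinv 0 = 0 := by simpa [h0] using hlinv 0 le_rfl
  have hsurj : SurjOn φ (Ici 0) (Ici 0) := by
    simpa [h0] using hcont.surjOn_Ici_of_tendsto_atTop htop
  have hmaps : MapsTo φinv (Ici 0) (Ici 0) := LeftInvOn.mapsTo hlinv hsurj
  have hinv_mono : StrictMonoOn φinv (Ici 0) := hmono.strictMonoOn_of_rightInvOn hmaps hrinv
  have hinv_cont : ContinuousWithinAt φinv (Ici 0) 0 := by
    refine hinv_mono.continuousWithinAt_right_of_surjOn self_mem_nhdsWithin ?_
    rw [hinv0]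
    exact (LeftInvOn.surjOn hlinv fun t ht => h0 ▸ hmono.monotoneOn self_mem_Ici ht ht).mono
      subset_rfl Ioi_subset_Ici_self
  have hint_all : ∀ c, IntegrableOn (fun s => 1 / φ s) (Ioo 0 c) := fun c =>
    (hint.Ioo_of_continuousOn_Icc (b := 1) (c := max c 1) <|
      continuousOn_const.div (hcont.mono fun s hs => zero_le_one.trans hs.1)
        fun s hs => (hφpos s (one_pos.trans_le hs.1)).ne').mono_set
      (Ioo_subset_Ioo_right (le_max_left c 1))
  set g : ℝ → ℝ := fun t => ∫ s in Ioo 0 (φinv t), 1 / φ s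
  have hg_mono : StrictMonoOn g (Ici 0) :=
    (strictMonoOn_setIntegral_Ioo_zero (fun s hs => one_div_pos.mpr (hφpos s hs)) hint_all).comp
      hinv_mono hmaps
  have hg_cont : ContinuousWithinAt g (Ici 0) 0 := by
    have hG : ContinuousWithinAt (fun y => ∫ s in Ioo 0 y, 1 / φ s) (Ici 0) (φinv 0) := by
      rw [hinv0]
      exact continuousWithinAt_setIntegral_Ioo_zero one_pos hint
    exact hG.comp hinv_cont hmaps
  have hg0 : g 0 = 0 := by simp [g, hinv0]
  have hα0 : α 0 = 1 := by simpa [hα 0] using hNeq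
  obtain rfl : α = alphaSeq g N := funext hα
  exact ⟨hα0, two_mul_alphaSeq_succ_lt hg_mono N, tendsto_two_pow_mul_alphaSeq hg_cont hg0 N,
    by positivity,
    le_two_rpow_neg_of_two_mul_succ_le hα0.le fun k => (two_mul_alphaSeq_succ_lt hg_mono N k).le,
    eventually_atTop.mp (eventually_two_rpow_neg_add_lt_alphaSeq_lt hg_mono hg_cont hg0 N)⟩

/-- Properties of the sequence
`α_k = 2^{−(N+k)} (1 + ∫₀^{φ⁻¹(2^{−(N+k)})} ds/φ(s))`. -/
theorem alpha_seq_properties (φ φinv : ℝ → ℝ)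
    (hmono : StrictMonoOn φ (Ici 0))
    (hcont : ContinuousOn φ (Ici 0))
    (hconc : ConcaveOn ℝ (Ici 0) φ)
    (h0 : φ 0 = 0)
    (hnonneg : ∀ t, 0 ≤ t → 0 ≤ φ t)
    (htop : Tendsto φ atTop atTop)
    (hlinv : ∀ t, 0 ≤ t → φinv (φ t) = t)
    (hrinv : ∀ s, 0 ≤ s → φ (φinv s) = s)
    (hint : IntegrableOn (fun s => 1 / φ s) (Ioo (0:ℝ) 1))
    (N : ℝ) (hN : 0 < N)
    (hNeq : (2:ℝ) ^ (-N) * (1 + ∫ s in Ioo (0:ℝ) (φinv ((2:ℝ) ^ (-N))), 1 / φ s) = 1)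
    (α : ℕ → ℝ)
    (hα : ∀ k : ℕ, α k = (2:ℝ) ^ (-(N + (k:ℝ))) *
      (1 + ∫ s in Ioo (0:ℝ) (φinv ((2:ℝ) ^ (-(N + (k:ℝ))))), 1 / φ s)) :
    α 0 = 1 ∧
    (∀ k : ℕ, 2 * α (k + 1) < α k) ∧
    Tendsto (fun k : ℕ => 2 ^ k * α k) atTop (𝓝 ((2:ℝ) ^ (-N))) ∧
    (0:ℝ) < (2:ℝ) ^ (-N) ∧
    (∀ k : ℕ, α k ≤ (2:ℝ) ^ (-(k:ℝ))) ∧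
    ∃ K₀ : ℕ, ∀ k : ℕ, K₀ ≤ k →
      (2:ℝ) ^ (-(N + (k:ℝ))) < α k ∧ α k < (2:ℝ) ^ (-(N + (k:ℝ) - 1)) :=
  alpha_seq_properties_general φ φinv hmono hcont h0 htop hlinv hrinv hint N hNeq α hα
end

section
/- Let φ : [0,∞) → [0,∞) be strictly increasing, continuous, concave, with φ(0) = 0 and lim_{t→∞} φ(t) = ∞, assume ∫₀¹ ds/φ(s) < ∞, let N > 0 satisfy 2^{−N}(1 + ∫₀^{φ⁻¹(2^{−N})} ds/φ(s)) = 1, and set α_k = 2^{−(N+k)}(1 + ∫₀^{φ⁻¹(2^{−(N+k)})} ds/φ(s)) for k ≥ 0. For k ≥ 1 define β_k = (α_{k−1} − 2α_k)/4 = 2^{−(N+k+1)} ∫_{φ⁻¹(2^{−(N+k)})}^{φ⁻¹(2^{−(N+k−1)})} ds/φ(s). Then: (a) φ(2β_k) < 2^{−(N+k)+1}; (b) 2^{−(N+k)} ≤ φ(4β_k); (c) the sequence (β_k) is strictly decreasing and lim_{k→∞} β_k = 0. -/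
open Set MeasureTheory Filter
open scoped Topology

/-! With `y k = φ⁻¹(2^{-(N+k)})`, `β_{k+1}` is `φ(y k)/4 · ∫_{y (k+1)}^{y k} ds/φ(s)`, and
`φ(y k)/2 < φ < φ(y k)` inside that interval, so
`(y k - y (k+1))/4 < β_{k+1} < (y k - y (k+1))/2`.
The upper bound gives (a); for (b), subadditivity of the concave `φ` gives
`φ(y k - y (k+1)) ≥ φ(y k) - φ(y (k+1)) = φ(y (k+1))`. Convexity of `φ⁻¹` gives
`2 (y (k+1) - y (k+2)) ≤ y k - y (k+1)`, which chains the two bounds into strict monotonicity,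
and `0 ≤ β_{k+1} ≤ y k / 2 → 0`. -/

namespace ConcaveOn

variable {f : ℝ → ℝ}

theorem mul_map_le_map_mul (hf : ConcaveOn ℝ (Ici 0) f) (h0 : 0 ≤ f 0) {t x : ℝ}
    (ht₀ : 0 ≤ t) (ht₁ : t ≤ 1) (hx : 0 ≤ x) : t * f x ≤ f (t * x) := by
  have h := hf.2 (mem_Ici.2 hx) self_mem_Ici ht₀ (sub_nonneg.2 ht₁) (add_sub_cancel t 1)
  simp only [smul_eq_mul, mul_zero, add_zero] at h
  nlinarith [mul_nonneg (sub_nonneg.2 ht₁) h0]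

theorem map_add_le (hf : ConcaveOn ℝ (Ici 0) f) (h0 : 0 ≤ f 0) {u v : ℝ}
    (hu : 0 ≤ u) (hv : 0 ≤ v) : f (u + v) ≤ f u + f v := by
  rcases (add_nonneg hu hv).eq_or_lt with huv | huv
  · obtain ⟨rfl, rfl⟩ : u = 0 ∧ v = 0 := ⟨by linarith, by linarith⟩
    simpa using h0
  have hu' := hf.mul_map_le_map_mul h0 (div_nonneg hu huv.le)
    (div_le_one_of_le₀ (by linarith) huv.le) huv.le
  have hv' := hf.mul_map_le_map_mul h0 (div_nonneg hv huv.le)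
    (div_le_one_of_le₀ (by linarith) huv.le) huv.le
  rw [div_mul_cancel₀ _ huv.ne'] at hu' hv'
  have hsum : u / (u + v) * f (u + v) + v / (u + v) * f (u + v) = f (u + v) := by
    field_simp
  linarith

theorem le_mul_add_mul_of_map_le (hf : ConcaveOn ℝ (Ici 0) f) (hmono : StrictMonoOn f (Ici 0))
    {x z m a b : ℝ} (hx : 0 ≤ x) (hz : 0 ≤ z) (hm : 0 ≤ m) (ha : 0 ≤ a) (hb : 0 ≤ b)
    (hab : a + b = 1) (hfm : f m ≤ a * f x + b * f z) : m ≤ a * x + b * z := by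
  by_contra! hlt
  have hconc := hf.2 (mem_Ici.2 hx) (mem_Ici.2 hz) ha hb hab
  have hmid : (0 : ℝ) ≤ a * x + b * z := by positivity
  have := hmono (mem_Ici.2 hmid) (mem_Ici.2 hm) hlt
  simp only [smul_eq_mul] at hconc
  linarith

end ConcaveOn

namespace StrictAntiOn

variable {f : ℝ → ℝ} {a b : ℝ}

theorem sub_mul_lt_integral (hf : StrictAntiOn f (Icc a b)) (hc : ContinuousOn f (Icc a b))
    (hab : a < b) : (b - a) * f b < ∫ x in a..b, f x := by
  rw [← smul_eq_mul, ← intervalIntegral.integral_const]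
  refine intervalIntegral.integral_lt_integral_of_continuousOn_of_le_of_exists_lt hab
    continuousOn_const hc (fun x hx => hf.antitoneOn (Ioc_subset_Icc_self hx)
      (right_mem_Icc.2 hab.le) hx.2) ⟨a, left_mem_Icc.2 hab.le, ?_⟩
  exact hf (left_mem_Icc.2 hab.le) (right_mem_Icc.2 hab.le) hab

theorem integral_lt_sub_mul (hf : StrictAntiOn f (Icc a b)) (hc : ContinuousOn f (Icc a b))
    (hab : a < b) : ∫ x in a..b, f x < (b - a) * f a := by
  rw [← smul_eq_mul, ← intervalIntegral.integral_const]
  refine intervalIntegral.integral_lt_integral_of_continuousOn_of_le_of_exists_lt hab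
    hc continuousOn_const (fun x hx => hf.antitoneOn (left_mem_Icc.2 hab.le)
      (Ioc_subset_Icc_self hx) hx.1.le) ⟨b, right_mem_Icc.2 hab.le, ?_⟩
  exact hf (left_mem_Icc.2 hab.le) (right_mem_Icc.2 hab.le) hab

end StrictAntiOn

theorem MeasureTheory.IntegrableOn.intervalIntegrable_of_continuousOn_Ioi {f : ℝ → ℝ}
    {a c b : ℝ} (hf : IntegrableOn f (Ioo a c)) (hcont : ContinuousOn f (Ioi a)) (hac : a < c)
    (hb : a ≤ b) : IntervalIntegrable f volume a b := by
  have hac' : IntervalIntegrable f volume a c :=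
    (intervalIntegrable_iff_integrableOn_Ioo_of_le hac.le).2 hf
  have hcb : IntervalIntegrable f volume c (max b c) :=
    (hcont.mono fun x hx => ?_).intervalIntegrable
  · exact (hac'.trans hcb).mono_set (uIcc_subset_uIcc_left (by simp [uIcc_of_le, hb]))
  · rw [uIcc_of_le (le_max_right _ _)] at hx
    exact hac.trans_le hx.1

theorem MeasureTheory.integral_Ioo_eq_intervalIntegral {f : ℝ → ℝ} {a b : ℝ} (h : a ≤ b) :
    ∫ x in Ioo a b, f x = ∫ x in a..b, f x := by
  rw [intervalIntegral.integral_of_le h, integral_Ioc_eq_integral_Ioo]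

section StrictMonoOn

variable {φ : ℝ → ℝ}

theorem StrictMonoOn.map_pos (hmono : StrictMonoOn φ (Ici 0)) (h0 : φ 0 = 0) {s : ℝ}
    (hs : 0 < s) : 0 < φ s :=
  h0 ▸ hmono self_mem_Ici (mem_Ici.2 hs.le) hs

theorem StrictMonoOn.strictAntiOn_one_div (hmono : StrictMonoOn φ (Ici 0)) (h0 : φ 0 = 0) :
    StrictAntiOn (fun s => 1 / φ s) (Ioi 0) := fun _ hs _ ht hst =>
  one_div_lt_one_div_of_lt (hmono.map_pos h0 hs) (hmono (mem_Ici.2 (le_of_lt hs))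
    (mem_Ici.2 (le_of_lt ht)) hst)

theorem StrictMonoOn.continuousOn_one_div (hmono : StrictMonoOn φ (Ici 0))
    (hcont : ContinuousOn φ (Ici 0)) (h0 : φ 0 = 0) :
    ContinuousOn (fun s => 1 / φ s) (Ioi 0) :=
  continuousOn_const.div (hcont.mono Ioi_subset_Ici_self) fun _ hs => (hmono.map_pos h0 hs).ne'

theorem StrictMonoOn.tendsto_zero_of_tendsto_map_zero {ι : Type*} {l : Filter ι}
    (hmono : StrictMonoOn φ (Ici 0)) (h0 : φ 0 = 0) {u : ι → ℝ} (hu : ∀ i, 0 ≤ u i)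
    (hφu : Tendsto (fun i => φ (u i)) l (𝓝 0)) : Tendsto u l (𝓝 0) := by
  rw [Metric.tendsto_nhds]
  intro ε hε
  filter_upwards [hφu.eventually_lt_const (hmono.map_pos h0 hε)] with i hi
  rw [Real.dist_eq, sub_zero, abs_of_nonneg (hu i)]
  exact (hmono.lt_iff_lt (mem_Ici.2 (hu i)) (mem_Ici.2 hε.le)).1 hi

end StrictMonoOn

structure IsHalvingLevels (φ : ℝ → ℝ) (y : ℕ → ℝ) : Prop where
  pos : ∀ k, 0 < y k
  two_mul_map_succ : ∀ k, 2 * φ (y (k + 1)) = φ (y k)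

/-- The paper's `β_{k+1}`, for levels `y` with `φ (y k) = 2^{-(N+k)}`. -/
noncomputable def betaSeq (φ : ℝ → ℝ) (y : ℕ → ℝ) (k : ℕ) : ℝ :=
  φ (y k) / 4 * ∫ s in y (k + 1)..y k, 1 / φ s

namespace IsHalvingLevels

variable {φ : ℝ → ℝ} {y : ℕ → ℝ}

theorem succ_lt (hy : IsHalvingLevels φ y) (hmono : StrictMonoOn φ (Ici 0)) (h0 : φ 0 = 0)
    (k : ℕ) : y (k + 1) < y k := by
  refine (hmono.lt_iff_lt (mem_Ici.2 (hy.pos _).le) (mem_Ici.2 (hy.pos _).le)).1 ?_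
  linarith [hy.two_mul_map_succ k, hmono.map_pos h0 (hy.pos (k + 1))]

theorem betaSeq_eq (hy : IsHalvingLevels φ y)
    (hint : ∀ k, IntervalIntegrable (fun s => 1 / φ s) volume 0 (y k)) (k : ℕ) :
    betaSeq φ y k = (φ (y k) * (1 + ∫ s in Ioo 0 (y k), 1 / φ s) -
      2 * (φ (y (k + 1)) * (1 + ∫ s in Ioo 0 (y (k + 1)), 1 / φ s))) / 4 := by
  rw [betaSeq, integral_Ioo_eq_intervalIntegral (hy.pos k).le,
    integral_Ioo_eq_intervalIntegral (hy.pos (k + 1)).le,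
    ← intervalIntegral.integral_interval_sub_left (hint k) (hint (k + 1)),
    ← hy.two_mul_map_succ k]
  ring

theorem sub_div_four_lt_betaSeq (hy : IsHalvingLevels φ y) (hmono : StrictMonoOn φ (Ici 0))
    (hcont : ContinuousOn φ (Ici 0)) (h0 : φ 0 = 0) (k : ℕ) :
    (y k - y (k + 1)) / 4 < betaSeq φ y k := by
  have hIcc : Icc (y (k + 1)) (y k) ⊆ Ioi 0 := fun s hs => (hy.pos _).trans_le hs.1
  have h := ((hmono.strictAntiOn_one_div h0).mono hIcc).sub_mul_lt_integral
    ((hmono.continuousOn_one_div hcont h0).mono hIcc) (hy.succ_lt hmono h0 k)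
  have hpos := hmono.map_pos h0 (hy.pos k)
  calc (y k - y (k + 1)) / 4 = φ (y k) / 4 * ((y k - y (k + 1)) * (1 / φ (y k))) := by
        field_simp
    _ < betaSeq φ y k := by unfold betaSeq; gcongr

theorem betaSeq_lt_sub_div_two (hy : IsHalvingLevels φ y) (hmono : StrictMonoOn φ (Ici 0))
    (hcont : ContinuousOn φ (Ici 0)) (h0 : φ 0 = 0) (k : ℕ) :
    betaSeq φ y k < (y k - y (k + 1)) / 2 := by
  have hIcc : Icc (y (k + 1)) (y k) ⊆ Ioi 0 := fun s hs => (hy.pos _).trans_le hs.1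
  have h := ((hmono.strictAntiOn_one_div h0).mono hIcc).integral_lt_sub_mul
    ((hmono.continuousOn_one_div hcont h0).mono hIcc) (hy.succ_lt hmono h0 k)
  have hpos := hmono.map_pos h0 (hy.pos k)
  have hpos' := hmono.map_pos h0 (hy.pos (k + 1))
  calc betaSeq φ y k < φ (y k) / 4 * ((y k - y (k + 1)) * (1 / φ (y (k + 1)))) := by
        unfold betaSeq; gcongr
    _ = (y k - y (k + 1)) / 2 := by
        rw [← hy.two_mul_map_succ k]; field_simp; ring

theorem map_two_mul_betaSeq_lt (hy : IsHalvingLevels φ y) (hmono : StrictMonoOn φ (Ici 0))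
    (hcont : ContinuousOn φ (Ici 0)) (h0 : φ 0 = 0) (k : ℕ) :
    φ (2 * betaSeq φ y k) < φ (y k) := by
  have hlo := hy.sub_div_four_lt_betaSeq hmono hcont h0 k
  have hhi := hy.betaSeq_lt_sub_div_two hmono hcont h0 k
  have hlt := hy.succ_lt hmono h0 k
  exact hmono (mem_Ici.2 (by linarith)) (mem_Ici.2 (hy.pos k).le) (by linarith [hy.pos (k + 1)])

theorem map_succ_le_map_four_mul_betaSeq (hy : IsHalvingLevels φ y)
    (hmono : StrictMonoOn φ (Ici 0)) (hcont : ContinuousOn φ (Ici 0))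
    (hconc : ConcaveOn ℝ (Ici 0) φ) (h0 : φ 0 = 0) (k : ℕ) :
    φ (y (k + 1)) ≤ φ (4 * betaSeq φ y k) := by
  have hlo := hy.sub_div_four_lt_betaSeq hmono hcont h0 k
  have hgap : 0 ≤ y k - y (k + 1) := sub_nonneg.2 (hy.succ_lt hmono h0 k).le
  have hsub := hconc.map_add_le h0.ge hgap (hy.pos (k + 1)).le
  rw [sub_add_cancel] at hsub
  calc φ (y (k + 1)) ≤ φ (y k - y (k + 1)) := by linarith [hy.two_mul_map_succ k]
    _ ≤ φ (4 * betaSeq φ y k) :=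
        hmono.monotoneOn (mem_Ici.2 hgap) (mem_Ici.2 (by linarith)) (by linarith)

theorem betaSeq_strictAnti (hy : IsHalvingLevels φ y) (hmono : StrictMonoOn φ (Ici 0))
    (hcont : ContinuousOn φ (Ici 0)) (hconc : ConcaveOn ℝ (Ici 0) φ) (h0 : φ 0 = 0) :
    StrictAnti (betaSeq φ y) := by
  refine strictAnti_nat_of_succ_lt fun k => ?_
  have hconvex : y (k + 1) ≤ 1 / 3 * y k + 2 / 3 * y (k + 2) :=
    hconc.le_mul_add_mul_of_map_le hmono (hy.pos k).le (hy.pos (k + 2)).le (hy.pos (k + 1)).le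
      (by norm_num) (by norm_num) (by norm_num)
      (by linarith [hy.two_mul_map_succ k, hy.two_mul_map_succ (k + 1)])
  linarith [hy.betaSeq_lt_sub_div_two hmono hcont h0 (k + 1),
    hy.sub_div_four_lt_betaSeq hmono hcont h0 k]

theorem map_eq_mul_half_pow (hy : IsHalvingLevels φ y) (k : ℕ) :
    φ (y k) = φ (y 0) * (1 / 2) ^ k := by
  induction k with
  | zero => simp
  | succ k ih => rw [pow_succ, ← mul_assoc, ← ih, ← hy.two_mul_map_succ k]; ring

theorem tendsto_zero (hy : IsHalvingLevels φ y) (hmono : StrictMonoOn φ (Ici 0)) (h0 : φ 0 = 0) :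
    Tendsto y atTop (𝓝 0) := by
  refine hmono.tendsto_zero_of_tendsto_map_zero h0 (fun k => (hy.pos k).le) ?_
  have h := (tendsto_pow_atTop_nhds_zero_of_lt_one (by norm_num : (0 : ℝ) ≤ 1 / 2)
    (by norm_num)).const_mul (φ (y 0))
  rw [mul_zero] at h
  exact h.congr fun k => (hy.map_eq_mul_half_pow k).symm

theorem tendsto_betaSeq_zero (hy : IsHalvingLevels φ y) (hmono : StrictMonoOn φ (Ici 0))
    (hcont : ContinuousOn φ (Ici 0)) (h0 : φ 0 = 0) :
    Tendsto (betaSeq φ y) atTop (𝓝 0) := by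
  have hhalf : Tendsto (fun k => y k / 2) atTop (𝓝 0) := by
    simpa using (hy.tendsto_zero hmono h0).div_const 2
  refine tendsto_of_tendsto_of_tendsto_of_le_of_le tendsto_const_nhds hhalf
    (fun k => ?_) (fun k => ?_)
  · linarith [hy.sub_div_four_lt_betaSeq hmono hcont h0 k, hy.succ_lt hmono h0 k]
  · linarith [hy.betaSeq_lt_sub_div_two hmono hcont h0 k, hy.pos (k + 1)]

end IsHalvingLevels

theorem Set.LeftInvOn.apply_pos {φ φinv : ℝ → ℝ} (hlinv : LeftInvOn φinv φ (Ici 0))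
    (hcont : ContinuousOn φ (Ici 0)) (htop : Tendsto φ atTop atTop) (h0 : φ 0 = 0) {s : ℝ}
    (hs : 0 < s) : 0 < φinv s := by
  obtain ⟨t, ht, rfl⟩ := intermediate_value_Ici hcont htop (mem_Ici.2 (h0 ▸ hs.le))
  rw [hlinv ht]
  exact (mem_Ici.1 ht).lt_of_ne (by rintro rfl; exact hs.ne' h0)

theorem beta_seq_properties_general (φ φinv : ℝ → ℝ)
    (hmono : StrictMonoOn φ (Ici 0))
    (hcont : ContinuousOn φ (Ici 0))
    (hconc : ConcaveOn ℝ (Ici 0) φ)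
    (h0 : φ 0 = 0)
    (htop : Tendsto φ atTop atTop)
    (hlinv : ∀ t, 0 ≤ t → φinv (φ t) = t)
    (hrinv : ∀ s, 0 ≤ s → φ (φinv s) = s)
    (hint : IntegrableOn (fun s => 1 / φ s) (Ioo (0:ℝ) 1))
    (N : ℝ)
    (α : ℕ → ℝ)
    (hα : ∀ k : ℕ, α k = (2:ℝ) ^ (-(N + (k:ℝ))) *
      (1 + ∫ s in Ioo (0:ℝ) (φinv ((2:ℝ) ^ (-(N + (k:ℝ))))), 1 / φ s))
    (β : ℕ → ℝ)
    (hβ : ∀ k : ℕ, β (k + 1) = (α k - 2 * α (k + 1)) / 4) :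
    (∀ k : ℕ, β (k + 1) = (2:ℝ) ^ (-(N + (k:ℝ) + 2)) *
      ∫ s in Ioo (φinv ((2:ℝ) ^ (-(N + (k:ℝ) + 1)))) (φinv ((2:ℝ) ^ (-(N + (k:ℝ))))),
        1 / φ s) ∧
    (∀ k : ℕ, φ (2 * β (k + 1)) < (2:ℝ) ^ (-(N + (k:ℝ) + 1) + 1)) ∧
    (∀ k : ℕ, (2:ℝ) ^ (-(N + (k:ℝ) + 1)) ≤ φ (4 * β (k + 1))) ∧
    StrictAnti (fun k : ℕ => β (k + 1)) ∧
    Tendsto (fun k : ℕ => β (k + 1)) atTop (𝓝 0) := by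
  set c : ℕ → ℝ := fun k => (2:ℝ) ^ (-(N + (k:ℝ))) with hc
  set y : ℕ → ℝ := fun k => φinv (c k)
  have hc_succ : ∀ k : ℕ, (2:ℝ) ^ (-(N + (k:ℝ) + 1)) = c (k + 1) := fun k => by
    simp only [hc]; push_cast; ring_nf
  have hc_quarter : ∀ k : ℕ, (2:ℝ) ^ (-(N + k + 2)) = c k / 4 := fun k => by
    rw [show -(N + k + 2) = -(N + k) - 2 by ring, Real.rpow_sub two_pos,
      show (2:ℝ) ^ (2:ℝ) = 4 by norm_num]
  have hφy : ∀ k, φ (y k) = c k := fun k => hrinv _ (by positivity)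
  have hy : IsHalvingLevels φ y := by
    refine ⟨fun k => LeftInvOn.apply_pos hlinv hcont htop h0 (by positivity), fun k => ?_⟩
    rw [hφy, hφy, ← hc_succ, show -(N + k + 1) = -(N + k) - 1 by ring,
      Real.rpow_sub_one two_ne_zero]
    ring
  have hβy : ∀ k, β (k + 1) = betaSeq φ y k := fun k => by
    refine (hβ k).trans ((hy.betaSeq_eq (fun k => ?_) k).trans ?_).symm
    · exact hint.intervalIntegrable_of_continuousOn_Ioi (hmono.continuousOn_one_div hcont h0)
        one_pos (hy.pos k).le
    · rw [hα, hα, hφy, hφy]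
  refine ⟨fun k => ?_, fun k => ?_, fun k => ?_, ?_, ?_⟩
  · rw [hβy, betaSeq, hφy, hc_quarter, hc_succ]
    exact congrArg (c k / 4 * ·) (integral_Ioo_eq_intervalIntegral (hy.succ_lt hmono h0 k).le).symm
  · rw [show -(N + k + 1) + 1 = -(N + k) by ring, hβy]
    exact (hy.map_two_mul_betaSeq_lt hmono hcont h0 k).trans_eq (hφy k)
  · rw [hc_succ, hβy, ← hφy]
    exact hy.map_succ_le_map_four_mul_betaSeq hmono hcont hconc h0 k
  · simpa only [hβy] using hy.betaSeq_strictAnti hmono hcont hconc h0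
  · simpa only [hβy] using hy.tendsto_betaSeq_zero hmono hcont h0

/-- Properties of the sequence `β_k = (α_{k−1} − 2α_k)/4`, `k ≥ 1`:
(a) `φ(2β_k) < 2^{−(N+k)+1}`; (b) `2^{−(N+k)} ≤ φ(4β_k)`; (c) `(β_k)` is strictly decreasing
with limit `0`.  (Here `β_k` also equals
`2^{−(N+k+1)} ∫_{φ⁻¹(2^{−(N+k)})}^{φ⁻¹(2^{−(N+k−1)})} ds/φ(s)`.) -/
theorem beta_seq_properties (φ φinv : ℝ → ℝ)
    (hmono : StrictMonoOn φ (Ici 0))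
    (hcont : ContinuousOn φ (Ici 0))
    (hconc : ConcaveOn ℝ (Ici 0) φ)
    (h0 : φ 0 = 0)
    (hnonneg : ∀ t, 0 ≤ t → 0 ≤ φ t)
    (htop : Tendsto φ atTop atTop)
    (hlinv : ∀ t, 0 ≤ t → φinv (φ t) = t)
    (hrinv : ∀ s, 0 ≤ s → φ (φinv s) = s)
    (hint : IntegrableOn (fun s => 1 / φ s) (Ioo (0:ℝ) 1))
    (N : ℝ) (hN : 0 < N)
    (hNeq : (2:ℝ) ^ (-N) * (1 + ∫ s in Ioo (0:ℝ) (φinv ((2:ℝ) ^ (-N))), 1 / φ s) = 1)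
    (α : ℕ → ℝ)
    (hα : ∀ k : ℕ, α k = (2:ℝ) ^ (-(N + (k:ℝ))) *
      (1 + ∫ s in Ioo (0:ℝ) (φinv ((2:ℝ) ^ (-(N + (k:ℝ))))), 1 / φ s))
    (β : ℕ → ℝ)
    (hβ : ∀ k : ℕ, β (k + 1) = (α k - 2 * α (k + 1)) / 4) :
    (∀ k : ℕ, β (k + 1) = (2:ℝ) ^ (-(N + (k:ℝ) + 2)) *
      ∫ s in Ioo (φinv ((2:ℝ) ^ (-(N + (k:ℝ) + 1)))) (φinv ((2:ℝ) ^ (-(N + (k:ℝ))))),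
        1 / φ s) ∧
    (∀ k : ℕ, φ (2 * β (k + 1)) < (2:ℝ) ^ (-(N + (k:ℝ) + 1) + 1)) ∧
    (∀ k : ℕ, (2:ℝ) ^ (-(N + (k:ℝ) + 1)) ≤ φ (4 * β (k + 1))) ∧
    StrictAnti (fun k : ℕ => β (k + 1)) ∧
    Tendsto (fun k : ℕ => β (k + 1)) atTop (𝓝 0) :=
  beta_seq_properties_general φ φinv hmono hcont hconc h0 htop hlinv hrinv hint N α hα β hβ
end
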